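/- Let Γ and C be 2×2 real symmetric matrices with C positive definite, and let Σ be any 2×2 real matrix. For ξ > 0 and φ ∈ ℝ let V₀(ξ,φ) = (1/2)·[[ξ sin²φ + ξ⁻¹cos²φ, (ξ − ξ⁻¹) sinφ cosφ],[(ξ − ξ⁻¹) sinφ cosφ, ξ cos²φ + ξ⁻¹ sin²φ]], and let M(ξ,φ) := (1/g)·Ω·[2(det V₀ + 1/4)·V₀ + 4(det V₀)·C]·Ωᵀ with V₀ = V₀(ξ,φ) and g = 4(det V₀)(det C) + 2(det V₀ + 1/4)Tr(V₀ΩCΩᵀ) + (det V₀ + 1/4)². Define U := ΣΩΓΩᵀΣᵀ, uₓ := det C + 1/4, u_y := (det Σ)² − Tr(ΩCΩᵀU), and for ψ ∈ ℝ set kₓ(ψ) := (sin ψ, cos ψ)·U·(sin ψ, cos ψ)ᵀ and k_y(ψ) := (sin ψ, cos ψ)·C·(sin ψ, cos ψ)ᵀ. Then for all ξ > 0 and φ ∈ ℝ: det(Γ − Σᵀ M(ξ,φ) Σ) = det Γ − [−u_y + (ξ/2)·kₓ(φ − π/2) + (1/(2ξ))·kₓ(φ)] / [uₓ + (ξ/2)·k_y(φ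 − π/2) + (1/(2ξ))·k_y(φ)]. (This is the identity underlying the fidelity formula Eq. (17) of the paper, F(ξ,φ) = [det Γ^tr − h(ξ)]^(−1/2).) -/

import Mathlib

set_option maxHeartbeats 4000000


open Matrix Real

/-- The 2×2 real matrix `Ω = [[0,-1],[1,0]]`. -/
def Om : Matrix (Fin 2) (Fin 2) ℝ := !![0, -1; 1, 0]

/-- The vector `(sin ψ, cos ψ)`. -/
noncomputable def vphi (ψ : ℝ) : Fin 2 → ℝ := ![Real.sin ψ, Real.cos ψ]

/-- The correlation matrix `V₀(ξ,φ)` of a squeezed state, Eq. (10). -/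
noncomputable def V0 (ξ φ : ℝ) : Matrix (Fin 2) (Fin 2) ℝ :=
  (1/2 : ℝ) •
    !![ξ * Real.sin φ ^ 2 + ξ⁻¹ * Real.cos φ ^ 2, (ξ - ξ⁻¹) * Real.sin φ * Real.cos φ;
       (ξ - ξ⁻¹) * Real.sin φ * Real.cos φ, ξ * Real.cos φ ^ 2 + ξ⁻¹ * Real.sin φ ^ 2]

/-- The identity underlying the fidelity formula Eq. (17):
`det (Γ - Σᵀ M(ξ,φ) Σ) = det Γ - [−u_y + (ξ/2) kₓ(φ−π/2) + (1/(2ξ)) kₓ(φ)] /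
[uₓ + (ξ/2) k_y(φ−π/2) + (1/(2ξ)) k_y(φ)]`. -/
theorem det_gamma_cond_eq (Γ C S : Matrix (Fin 2) (Fin 2) ℝ)
    (hΓ : Γᵀ = Γ) (hC : C.PosDef) (ξ φ : ℝ) (hξ : 0 < ξ) :
    let V₀ := V0 ξ φ
    let g := 4 * V₀.det * C.det + 2 * (V₀.det + 1/4) * (V₀ * Om * C * Omᵀ).trace
        + (V₀.det + 1/4) ^ 2
    let M := (1 / g) • (Om * ((2 * (V₀.det + 1/4)) • V₀ + (4 * V₀.det) • C) * Omᵀ)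
    let U := S * Om * Γ * Omᵀ * Sᵀ
    let ux := C.det + 1/4
    let uy := S.det ^ 2 - (Om * C * Omᵀ * U).trace
    let kx : ℝ → ℝ := fun ψ => vphi ψ ⬝ᵥ (U *ᵥ vphi ψ)
    let ky : ℝ → ℝ := fun ψ => vphi ψ ⬝ᵥ (C *ᵥ vphi ψ)
    (Γ - Sᵀ * M * S).det =
      Γ.det - (-uy + (ξ/2) * kx (φ - π/2) + (1/(2*ξ)) * kx φ) /
              (ux + (ξ/2) * ky (φ - π/2) + (1/(2*ξ)) * ky φ) := by
  intro V₀ g M U ux uy kx ky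
  have hΓ10 : Γ 1 0 = Γ 0 1 := congrFun (congrFun hΓ 0) 1
  have hC10 : C 1 0 = C 0 1 := congrFun (congrFun hC.1 0) 1
  have hpy : Real.sin φ ^ 2 + Real.cos φ ^ 2 = 1 := Real.sin_sq_add_cos_sq φ
  have hxne : ξ ≠ 0 := ne_of_gt hξ
  have hxx : ξ * ξ⁻¹ = 1 := mul_inv_cancel₀ hxne
  have hv : ∀ ψ : ℝ, vphi ψ ≠ 0 := by
    intro ψ h
    have h0 : Real.sin ψ = 0 := congrFun h 0
    have h1 : Real.cos ψ = 0 := congrFun h 1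
    have := Real.sin_sq_add_cos_sq ψ
    rw [h0, h1] at this; norm_num at this
  have hky : ∀ ψ : ℝ, 0 < ky ψ := by
    intro ψ
    have h := hC.dotProduct_mulVec_pos (hv ψ)
    rw [star_trivial] at h
    exact h
  have hdetC : 0 < C.det := hC.det_pos
  have hdetV : V₀.det = 1/4 := by
    simp only [V₀, V0, Matrix.det_fin_two, Matrix.smul_apply, Matrix.of_apply,
      Matrix.cons_val', Matrix.cons_val_zero, Matrix.cons_val_one, Matrix.head_cons,
      Matrix.head_fin_const, Matrix.empty_val', Matrix.cons_val_fin_one, smul_eq_mul]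
    linear_combination (1/4 * ξ * ξ⁻¹ * (Real.sin φ^2 + Real.cos φ^2 + 1)) * hpy + (1/4) * hxx
  set E : ℝ := 2*ξ*((C 0 0 * C 1 1 - C 0 1 * C 0 1) + 1/4)
      + ξ^2 * (C 0 0 * Real.cos φ^2 - 2 * C 0 1 * Real.sin φ * Real.cos φ + C 1 1 * Real.sin φ^2)
      + (C 0 0 * Real.sin φ^2 + 2 * C 0 1 * Real.sin φ * Real.cos φ + C 1 1 * Real.cos φ^2)
      with hEdef
  have hE2 : E = 2*ξ*(C.det + 1/4) + ξ^2 * ky (φ - π/2) + ky φ := by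
    rw [hEdef]
    simp only [ky, vphi, dotProduct, Matrix.mulVec, Fin.sum_univ_two,
      Matrix.cons_val_zero, Matrix.cons_val_one, Matrix.head_cons,
      Matrix.det_fin_two, hC10, Real.sin_sub, Real.cos_sub,
      Real.sin_pi_div_two, Real.cos_pi_div_two]
    ring
  have hEpos : 0 < E := by
    rw [hE2]
    have h1 := hky φ
    have h2 := hky (φ - π/2)
    have h3 : 0 < ξ^2 * ky (φ - π/2) := by positivity
    nlinarith
  have hEne : E ≠ 0 := ne_of_gt hEpos
  have hDenE : ux + (ξ/2) * ky (φ - π/2) + (1/(2*ξ)) * ky φ = E / (2*ξ) := by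
    rw [hE2]
    field_simp
    ring
  have hgE : g = E / (2*ξ) := by
    have : g = C.det + (V₀ * Om * C * Omᵀ).trace + 1/4 := by
      simp only [g, hdetV]; ring
    rw [this, hE2]
    simp only [V₀, V0, Om, Matrix.trace_fin_two, Matrix.mul_apply, Matrix.smul_apply,
      Fin.sum_univ_two, Matrix.transpose_apply, Matrix.of_apply, Matrix.cons_val',
      Matrix.cons_val_zero, Matrix.cons_val_one, Matrix.head_cons, Matrix.head_fin_const,
      Matrix.empty_val', Matrix.cons_val_fin_one, smul_eq_mul, Matrix.det_fin_two,
      ky, vphi, dotProduct, Matrix.mulVec, Real.sin_sub, Real.cos_sub,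
      Real.sin_pi_div_two, Real.cos_pi_div_two, hC10]
    field_simp
    ring
  have hdet_sub : ∀ A B : Matrix (Fin 2) (Fin 2) ℝ,
      (A - B).det = A.det - (A.trace * B.trace - (A * B).trace) + B.det := by
    intro A B
    simp only [Matrix.det_fin_two, Matrix.trace_fin_two, Matrix.mul_apply,
      Fin.sum_univ_two, Matrix.sub_apply]
    ring
  have hW : (2 * (V₀.det + 1/4)) • V₀ + (4 * V₀.det) • C = V₀ + C := by
    rw [hdetV]; norm_num
  have hM : M = (2*ξ/E) • (Om * (V₀ + C) * Omᵀ) := by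
    show (1/g) • _ = _
    rw [hW, hgE, one_div_div]
  set B := Sᵀ * (Om * (V₀ + C) * Omᵀ) * S with hB
  have hSMS : Sᵀ * M * S = (2*ξ/E) • B := by
    rw [hM, hB, Matrix.mul_smul, Matrix.smul_mul]
  have hdB : B.det = S.det ^ 2 * (E / (2*ξ)) := by
    rw [hB, hEdef]
    simp only [V₀, V0, Om, Matrix.det_fin_two, Matrix.mul_apply, Matrix.smul_apply,
      Fin.sum_univ_two, Matrix.add_apply, Matrix.transpose_apply, Matrix.of_apply,
      Matrix.cons_val', Matrix.cons_val_zero, Matrix.cons_val_one, Matrix.head_cons,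
      Matrix.head_fin_const, Matrix.empty_val', Matrix.cons_val_fin_one, smul_eq_mul, hC10]
    field_simp
    ring_nf
    linear_combination (8*(S 0 1)^2*(S 1 0)^2*(ξ)^3 + 8*(S 0 1)^2*(S 1 0)^2*(Real.cos φ)^2*(ξ)^3 + 8*(S 0 1)^2*(S 1 0)^2*(Real.sin φ)^2*(ξ)^3 + -16*(S 0 0)*(S 0 1)*(S 1 0)*(S 1 1)*(ξ)^3 + -16*(S 0 0)*(S 0 1)*(S 1 0)*(S 1 1)*(Real.cos φ)^2*(ξ)^3 + -16*(S 0 0)*(S 0 1)*(S 1 0)*(S 1 1)*(Real.sin φ)^2*(ξ)^3 + 8*(S 0 0)^2*(S 1 1)^2*(ξ)^3 + 8*(S 0 0)^2*(S 1 1)^2*(Real.cos φ)^2*(ξ)^3 + 8*(S 0 0)^2*(S 1 1)^2*(Real.sin φ)^2*(ξ)^3 + (4*ξ^2 - 8*ξ^3)*(S 0 0 * S 1 1 - S 0 1 * S 1 0)^2*(Real.sin φ^2 + Real.cos φ^2 + 1)) * hpy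
  have hkey : Γ.trace * B.trace - (Γ * B).trace - S.det ^ 2 =
      -uy + (ξ/2) * kx (φ - π/2) + (1/(2*ξ)) * kx φ := by
    simp only [B, uy, kx, U, V₀, V0, Om, vphi, Matrix.det_fin_two, Matrix.trace_fin_two,
      Matrix.mul_apply, Matrix.smul_apply, Fin.sum_univ_two, Matrix.add_apply,
      Matrix.transpose_apply, Matrix.of_apply, Matrix.cons_val', Matrix.cons_val_zero,
      Matrix.cons_val_one, Matrix.head_cons, Matrix.head_fin_const, Matrix.empty_val',
      Matrix.cons_val_fin_one, dotProduct, Matrix.mulVec, Real.sin_sub, Real.cos_sub,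
      Real.sin_pi_div_two, Real.cos_pi_div_two, smul_eq_mul, hΓ10, hC10]
    field_simp
    ring_nf
  rw [hDenE, hSMS, hdet_sub, ← hkey]
  rw [Matrix.trace_smul, Matrix.mul_smul, Matrix.trace_smul, Matrix.det_smul]
  simp only [smul_eq_mul, Fintype.card_fin]
  rw [hdB]
  field_simp
  ring
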